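/- Let D₁, D₂ be probability measures and suppose there exists a measurable set S with D₁(S) ≥ τ and D₂(S) ≤ 1 − τ for some τ ∈ [1/2, 1]. Then the Jensen–Shannon divergence satisfies D_JS(D₁ ‖ D₂) ≥ (2τ−1)²/2. -/

import Mathlib

/-!
Let `M = (D₁ + D₂)/2`. Then `M(S) = (D₁(S) + D₂(S))/2` lies at distance at least `(2τ - 1)/2`
from both `D₁(S)` and `D₂(S)`. Jensen's inequality for `x log x`, applied to the density
`dDᵢ/dM` on `S` and on `Sᶜ`, bounds `D_KL(Dᵢ ‖ M)` below by the divergence between the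
Bernoulli laws with parameters `Dᵢ(S)` and `M(S)`, and the binary Pinsker inequality bounds that by
`2 (Dᵢ(S) - M(S))²`. Since `Dᵢ ≤ 2M`, the densities are bounded by `2`, so every integral involved
is finite.
-/

open scoped ENNReal
open MeasureTheory Real Set

/-- Kullback–Leibler divergence `∫ log (dP/dQ) dP` (via the Radon–Nikodym derivative). -/
noncomputable def klDivergence {Ω : Type*} [MeasurableSpace Ω] (P Q : Measure Ω) : ℝ :=
  ∫ ω, Real.log ((P.rnDeriv Q ω).toReal) ∂P

/-- Jensen–Shannon divergence. -/
noncomputable def jsDivergence {Ω : Type*} [MeasurableSpace Ω] (P Q : Measure Ω) : ℝ :=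
  (1 / 2) * klDivergence P (((1 : ℝ≥0∞) / 2) • P + ((1 : ℝ≥0∞) / 2) • Q)
    + (1 / 2) * klDivergence Q (((1 : ℝ≥0∞) / 2) • P + ((1 : ℝ≥0∞) / 2) • Q)

/-- The Kullback–Leibler divergence of `Bernoulli b` from `Bernoulli a`; since `log 0 = 0`, the
terms with `a = 0` or `a = 1` vanish as they should. -/
noncomputable def binaryKL (a b : ℝ) : ℝ :=
  a * log (a / b) + (1 - a) * log ((1 - a) / (1 - b))

theorem binaryKL_one_sub_one_sub (a b : ℝ) : binaryKL (1 - a) (1 - b) = binaryKL a b := by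
  simp only [binaryKL, sub_sub_cancel]
  ring

noncomputable def binaryCrossEntropy (a b : ℝ) : ℝ :=
  -(a * log b) - (1 - a) * log (1 - b)

theorem binaryKL_eq_binaryCrossEntropy_sub {a b : ℝ} (hb₀ : b ≠ 0) (hb₁ : b ≠ 1) :
    binaryKL a b = binaryCrossEntropy a b - binaryCrossEntropy a a := by
  have h₁ : a * log (a / b) = a * log a - a * log b := by
    rcases eq_or_ne a 0 with rfl | ha
    · simp
    · rw [log_div ha hb₀]
      ring
  have h₂ : (1 - a) * log ((1 - a) / (1 - b)) = (1 - a) * log (1 - a) - (1 - a) * log (1 - b) := by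
    rcases eq_or_ne (1 - a) 0 with ha | ha
    · simp [ha]
    · rw [log_div ha (sub_ne_zero.2 hb₁.symm)]
      ring
  rw [binaryKL, binaryCrossEntropy, binaryCrossEntropy, h₁, h₂]
  ring

theorem hasDerivAt_binaryCrossEntropy_sub_sq (a : ℝ) {y : ℝ} (hy₀ : y ≠ 0) (hy₁ : y ≠ 1) :
    HasDerivAt (fun y ↦ binaryCrossEntropy a y - 2 * (a - y) ^ 2)
      ((y - a) * (2 * y - 1) ^ 2 / (y * (1 - y))) y := by
  have hy₁' : 1 - y ≠ 0 := sub_ne_zero.2 hy₁.symm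
  refine ((((hasDerivAt_log hy₀).const_mul a).neg.sub
    (((hasDerivAt_log hy₁').comp y ((hasDerivAt_id' y).const_sub 1)).const_mul (1 - a))).sub
    ((((hasDerivAt_id' y).const_sub a).pow 2).const_mul 2)).congr_deriv ?_
  field_simp
  ring

theorem monotoneOn_binaryCrossEntropy_sub_sq {a b : ℝ} (ha : 0 ≤ a) (hb : b < 1) :
    MonotoneOn (fun y ↦ binaryCrossEntropy a y - 2 * (a - y) ^ 2) (Icc a b) := by
  have hlog : ContinuousOn (fun y ↦ a * log y) (Icc a b) := by
    rcases ha.eq_or_lt with rfl | ha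
    · simpa using continuousOn_const
    · exact continuousOn_const.mul (continuousOn_log.mono fun y hy ↦ (ha.trans_le hy.1).ne')
  have hlog' : ContinuousOn (fun y ↦ log (1 - y)) (Icc a b) :=
    ContinuousOn.log (by fun_prop) fun y hy ↦ by linarith [hy.2]
  have hderiv : ∀ y ∈ Ioo a b, HasDerivAt (fun y ↦ binaryCrossEntropy a y - 2 * (a - y) ^ 2)
      ((y - a) * (2 * y - 1) ^ 2 / (y * (1 - y))) y := fun y hy ↦
    hasDerivAt_binaryCrossEntropy_sub_sq a (ha.trans_lt hy.1).ne' (by linarith [hy.2])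
  refine monotoneOn_of_deriv_nonneg (convex_Icc a b) ?_ ?_ ?_
  · exact (hlog.neg.sub (continuousOn_const.mul hlog')).sub (by fun_prop)
  · rw [interior_Icc]
    exact fun y hy ↦ (hderiv y hy).differentiableAt.differentiableWithinAt
  · rw [interior_Icc]
    intro y hy
    rw [(hderiv y hy).deriv]
    have : 0 < y := ha.trans_lt hy.1
    have : 0 < 1 - y := by linarith [hy.2]
    have : 0 ≤ y - a := by linarith [hy.1]
    positivity

theorem two_mul_sq_sub_le_binaryKL_of_le {a b : ℝ} (ha : 0 ≤ a) (hab : a ≤ b)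
    (hb : b ∈ Ioo 0 1) : 2 * (a - b) ^ 2 ≤ binaryKL a b := by
  have := monotoneOn_binaryCrossEntropy_sub_sq ha hb.2 (left_mem_Icc.2 hab) (right_mem_Icc.2 hab)
    hab
  rw [binaryKL_eq_binaryCrossEntropy_sub hb.1.ne' hb.2.ne]
  linarith

theorem two_mul_sq_sub_le_binaryKL {a b : ℝ} (ha : a ∈ Icc 0 1) (hb : b ∈ Ioo 0 1) :
    2 * (a - b) ^ 2 ≤ binaryKL a b := by
  rcases le_total a b with hab | hba
  · exact two_mul_sq_sub_le_binaryKL_of_le ha.1 hab hb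
  · have := two_mul_sq_sub_le_binaryKL_of_le (sub_nonneg.2 ha.2) (sub_le_sub_left hba 1)
      ⟨sub_pos.2 hb.2, sub_lt_self 1 hb.1⟩
    rw [binaryKL_one_sub_one_sub] at this
    linarith

section

variable {Ω : Type*} [MeasurableSpace Ω] {P M : Measure Ω}

theorem ae_rnDeriv_le_of_le_smul [SigmaFinite M] {c : ℝ≥0∞} (h : P ≤ c • M) :
    ∀ᵐ ω ∂M, P.rnDeriv M ω ≤ c := by
  refine ae_le_of_forall_setLIntegral_le_of_sigmaFinite (Measure.measurable_rnDeriv P M)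
    fun s _ _ ↦ ?_
  calc ∫⁻ ω in s, P.rnDeriv M ω ∂M ≤ P s := Measure.setLIntegral_rnDeriv_le s
    _ ≤ c * M s := h s
    _ = ∫⁻ _ in s, c ∂M := (setLIntegral_const s c).symm

theorem integrable_mul_log_rnDeriv_of_le_smul [IsFiniteMeasure M] {c : ℝ≥0∞} (hc : c ≠ ∞)
    (h : P ≤ c • M) :
    Integrable (fun ω ↦ (P.rnDeriv M ω).toReal * log (P.rnDeriv M ω).toReal) M := by
  obtain ⟨C, hC⟩ := isCompact_Icc.exists_bound_of_continuousOn
    (continuous_mul_log.continuousOn (s := Icc 0 c.toReal))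
  refine Integrable.of_bound (by fun_prop) C ?_
  filter_upwards [ae_rnDeriv_le_of_le_smul h] with ω hω
  exact hC _ ⟨ENNReal.toReal_nonneg, ENNReal.toReal_mono hc hω⟩

theorem klDivergence_eq_integral_mul_log_rnDeriv [SigmaFinite P] [SigmaFinite M] (hPM : P ≪ M) :
    klDivergence P M = ∫ ω, (P.rnDeriv M ω).toReal * log (P.rnDeriv M ω).toReal ∂M :=
  (integral_toReal_rnDeriv_mul hPM).symm

theorem measureReal_mul_log_div_le_setIntegral_mul_log_rnDeriv [IsFiniteMeasure P]
    [IsFiniteMeasure M] (hPM : P ≪ M)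
    (hint : Integrable (fun ω ↦ (P.rnDeriv M ω).toReal * log (P.rnDeriv M ω).toReal) M)
    {S : Set Ω} (hS : M S ≠ 0) :
    P.real S * log (P.real S / M.real S)
      ≤ ∫ ω in S, (P.rnDeriv M ω).toReal * log (P.rnDeriv M ω).toReal ∂M := by
  have hjensen := convexOn_mul_log.map_set_average_le continuous_mul_log.continuousOn isClosed_Ici
    hS (measure_ne_top M S) (ae_of_all _ fun _ ↦ ENNReal.toReal_nonneg)
    Measure.integrable_toReal_rnDeriv.integrableOn hint.integrableOn
  rw [setAverage_eq, setAverage_eq, Measure.setIntegral_toReal_rnDeriv hPM, smul_eq_mul,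
    smul_eq_mul] at hjensen
  have hMS : 0 < M.real S := ENNReal.toReal_pos hS (measure_ne_top M S)
  calc P.real S * log (P.real S / M.real S)
      = M.real S * ((M.real S)⁻¹ * P.real S * log ((M.real S)⁻¹ * P.real S)) := by
        field_simp
    _ ≤ M.real S * ((M.real S)⁻¹ * ∫ ω in S, (P.rnDeriv M ω).toReal
          * log (P.rnDeriv M ω).toReal ∂M) := by gcongr
    _ = _ := by field_simp

theorem binaryKL_le_klDivergence [IsProbabilityMeasure P] [IsProbabilityMeasure M] (hPM : P ≪ M)
    (hint : Integrable (fun ω ↦ (P.rnDeriv M ω).toReal * log (P.rnDeriv M ω).toReal) M)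
    {S : Set Ω} (hS : MeasurableSet S) (hMS : M.real S ∈ Ioo 0 1) :
    binaryKL (P.real S) (M.real S) ≤ klDivergence P M := by
  have h₀ : M S ≠ 0 := fun h ↦ by simp [measureReal_def, h] at hMS
  have h₁ : M Sᶜ ≠ 0 := by
    have : 0 < M.real Sᶜ := by linarith [probReal_compl_eq_one_sub (μ := M) hS, hMS.2]
    exact fun h ↦ by simp [measureReal_def, h] at this
  rw [klDivergence_eq_integral_mul_log_rnDeriv hPM, ← integral_add_compl hS hint, binaryKL,
    ← probReal_compl_eq_one_sub hS, ← probReal_compl_eq_one_sub hS]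
  exact add_le_add (measureReal_mul_log_div_le_setIntegral_mul_log_rnDeriv hPM hint h₀)
    (measureReal_mul_log_div_le_setIntegral_mul_log_rnDeriv hPM hint h₁)

theorem two_mul_sq_sub_le_klDivergence [IsProbabilityMeasure P] [IsProbabilityMeasure M]
    (hPM : P ≪ M)
    (hint : Integrable (fun ω ↦ (P.rnDeriv M ω).toReal * log (P.rnDeriv M ω).toReal) M)
    {S : Set Ω} (hS : MeasurableSet S) (hMS : M.real S ∈ Ioo 0 1) :
    2 * (P.real S - M.real S) ^ 2 ≤ klDivergence P M :=
  (two_mul_sq_sub_le_binaryKL ⟨measureReal_nonneg, measureReal_le_one⟩ hMS).trans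
    (binaryKL_le_klDivergence hPM hint hS hMS)

end

/-- If `D₁(S) ≥ τ` and `D₂(S) ≤ 1 − τ` for some measurable `S` and `τ ∈ [1/2, 1]`, then
`D_JS(D₁ ‖ D₂) ≥ (2τ−1)²/2`. -/
theorem jsd_ge_of_separated_set
    {Ω : Type*} [MeasurableSpace Ω] (D₁ D₂ : Measure Ω)
    [IsProbabilityMeasure D₁] [IsProbabilityMeasure D₂]
    (τ : ℝ) (hτ : τ ∈ Set.Icc (1 / 2 : ℝ) 1)
    (S : Set Ω) (hS : MeasurableSet S)
    (h₁ : ENNReal.ofReal τ ≤ D₁ S) (h₂ : D₂ S ≤ ENNReal.ofReal (1 - τ)) :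
    (2 * τ - 1) ^ 2 / 2 ≤ jsDivergence D₁ D₂ := by
  set M : Measure Ω := ((1 : ℝ≥0∞) / 2) • D₁ + ((1 : ℝ≥0∞) / 2) • D₂
  have hM : (2 : ℝ≥0∞) • M = D₁ + D₂ := by
    simp only [M, smul_add, smul_smul, ENNReal.mul_div_cancel two_ne_zero ENNReal.ofNat_ne_top,
      one_smul]
  have : IsProbabilityMeasure M := ⟨by simp [M, ENNReal.inv_two_add_inv_two]⟩
  have hMS : M.real S = (D₁.real S + D₂.real S) / 2 := by
    have := congrArg (·.real S) hM
    rw [measureReal_ennreal_smul_apply, measureReal_add_apply (μ₁ := D₁),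
      ENNReal.toReal_ofNat] at this
    linarith
  have hτ₁ : τ ≤ D₁.real S := (ENNReal.ofReal_le_iff_le_toReal (measure_ne_top _ _)).1 h₁
  have hτ₂ : D₂.real S ≤ 1 - τ := ENNReal.toReal_le_of_le_ofReal (by linarith [hτ.2]) h₂
  have pinsker (P : Measure Ω) [IsProbabilityMeasure P] (hP : P ≤ (2 : ℝ≥0∞) • M) :
      2 * (P.real S - M.real S) ^ 2 ≤ klDivergence P M :=
    two_mul_sq_sub_le_klDivergence (Measure.absolutelyContinuous_of_le_smul hP)
      (integrable_mul_log_rnDeriv_of_le_smul ENNReal.ofNat_ne_top hP) hS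
      ⟨by linarith [hτ.1, measureReal_nonneg (μ := D₂) (s := S)],
        by linarith [hτ.1, measureReal_le_one (μ := D₁) (s := S)]⟩
  have hKL₁ := pinsker D₁ (hM ▸ Measure.le_add_right le_rfl)
  have hKL₂ := pinsker D₂ (hM ▸ Measure.le_add_left le_rfl)
  rw [hMS] at hKL₁ hKL₂
  rw [jsDivergence]
  nlinarith [hτ.1]
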